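/- Let κ be an uncountable regular cardinal that is not a strong limit cardinal, let λ < κ be minimal with 2^λ ≥ κ, and let X ⊆ 2^λ have cardinality κ. Define a partial order P whose conditions are pairs p = ⟨s_p, a_p⟩ where s_p : n_p → 2^{<λ} is a finite sequence of binary sequences of length < λ and a_p is a finite subset of X, with p ≤ q iff s_q ⊆ s_p, a_q ⊆ a_p, and s_p(i) is not an initial segment of any x ∈ a_q for n_q ≤ i < n_p. Then P is <κ-linked (conditions with the same first component are compatible) but P is not κ-stationarily layered. -/

import Mathlib

universe u v

open Cardinal

namespace Layered

variable {P : Type u}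

section
variable [PartialOrder P]

/-- Two conditions are compatible if they have a common lower bound. -/
def Compat (p q : P) : Prop := ∃ r, r ≤ p ∧ r ≤ q

/-- Compatibility witnessed inside a suborder `S`. -/
def CompatIn (S : Set P) (p q : P) : Prop := ∃ r ∈ S, r ≤ p ∧ r ≤ q

/-- An antichain: a set of pairwise incompatible conditions. -/
def IsPOAntichain (A : Set P) : Prop := ∀ p ∈ A, ∀ q ∈ A, p ≠ q → ¬ Compat p q

/-- A maximal antichain: every condition is compatible with some member. -/
def IsMaxAntichain (A : Set P) : Prop := IsPOAntichain A ∧ ∀ p : P, ∃ q ∈ A, Compat p q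

/-- `S` is a regular suborder of `P`: the inclusion preserves incompatibility and
maximal antichains of `S` are maximal antichains of `P`. -/
def RegularSuborder (S : Set P) : Prop :=
  (∀ p ∈ S, ∀ q ∈ S, Compat p q → CompatIn S p q) ∧
  ∀ A ⊆ S, (∀ p ∈ A, ∀ q ∈ A, p ≠ q → ¬ CompatIn S p q) →
    (∀ p ∈ S, ∃ q ∈ A, CompatIn S p q) → ∀ p : P, ∃ q ∈ A, Compat p q

/-- `Reg_κ(P)`: regular suborders of size less than `κ`. -/
def RegSub (κ : Cardinal.{u}) (S : Set P) : Prop := RegularSuborder S ∧ #S < κ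

theorem reduct_exists' {S : Set P} (hS : RegularSuborder S) (p : P) :
    ∃ q ∈ S, ∀ r ∈ S, r ≤ q → Compat r p := by
  by_contra hcon
  push_neg at hcon
  set T : Set (Set P) :=
    {A | A ⊆ {r ∈ S | ¬ Compat r p} ∧ ∀ a ∈ A, ∀ b ∈ A, a ≠ b → ¬ CompatIn S a b} with hT
  have hzorn : ∀ c ⊆ T, IsChain (· ⊆ ·) c → ∃ ub ∈ T, ∀ s ∈ c, s ⊆ ub := by
    intro c hcT hchain
    refine ⟨⋃₀ c, ⟨?_, ?_⟩, fun s hs => Set.subset_sUnion_of_mem hs⟩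
    · intro z hz
      obtain ⟨s, hs, hzs⟩ := hz
      exact (hcT hs).1 hzs
    · intro a ha b hb hab
      obtain ⟨s, hs, has⟩ := ha
      obtain ⟨t, ht, hbt⟩ := hb
      rcases hchain.total hs ht with h | h
      · exact (hcT ht).2 a (h has) b hbt hab
      · exact (hcT hs).2 a has b (h hbt) hab
  obtain ⟨A, hAmax⟩ := zorn_subset T hzorn
  have hAT : A ∈ T := hAmax.prop
  have hAS : A ⊆ S := fun a ha => (hAT.1 ha).1
  have hpre : ∀ q ∈ S, ∃ a ∈ A, CompatIn S q a := by
    intro q hq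
    obtain ⟨r, hrS, hrq, hrp⟩ := hcon q hq
    by_cases hr : ∃ a ∈ A, CompatIn S r a
    · obtain ⟨a, haA, w, hwS, hwr, hwa⟩ := hr
      exact ⟨a, haA, w, hwS, le_trans hwr hrq, hwa⟩
    · push_neg at hr
      have hrA : r ∈ A := by
        have hmem : A ∪ {r} ∈ T := by
          constructor
          · intro z hz
            rcases hz with hz | hz
            · exact hAT.1 hz
            · rcases hz; exact ⟨hrS, hrp⟩
          · intro a ha b hb hab
            rcases ha with ha | ha <;> rcases hb with hb | hb
            · exact hAT.2 a ha b hb hab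
            · rcases hb
              intro ⟨w, hwS, hwa, hwb⟩
              exact hr a ha ⟨w, hwS, hwb, hwa⟩
            · rcases ha
              exact hr b hb
            · rcases ha; rcases hb; exact absurd rfl hab
        exact hAmax.2 hmem Set.subset_union_left (Or.inr rfl)
      exact ⟨r, hrA, r, hrS, hrq, le_refl r⟩
  obtain ⟨a, haA, w, hwa, hwp⟩ := hS.2 A hAS hAT.2 hpre p
  exact (hAT.1 haA).2 ⟨w, hwp, hwa⟩


end

theorem closure_exists' {Q ι : Type u} (F : Q → ι → Q) {κ : Cardinal.{u}}
    (hreg : κ.IsRegular) (hunc : ℵ₀ < κ) (hι : #ι < κ) (a : Set Q) (ha : #a < κ) :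
    ∃ M : Set Q, a ⊆ M ∧ #M < κ ∧ ∀ p ∈ M, ∀ i, F p i ∈ M := by
  let S : ℕ → Set Q := fun n => Nat.rec a (fun _ s => s ∪ ⋃ i, (fun q => F q i) '' s) n
  have hcard : ∀ n, #(↥(S n)) < κ := by
    intro n
    induction n with
    | zero => exact ha
    | succ n ih =>
      refine lt_of_le_of_lt (mk_union_le _ _) (Cardinal.add_lt_of_lt hreg.aleph0_le ih ?_)
      refine lt_of_le_of_lt (mk_iUnion_le _) (Cardinal.mul_lt_of_lt hreg.aleph0_le hι ?_)
      exact Cardinal.iSup_lt_of_isRegular hreg hι (fun i => lt_of_le_of_lt mk_image_le ih)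
  refine ⟨⋃ n : ULift.{u} ℕ, S n.down, ?_, ?_, ?_⟩
  · exact Set.subset_iUnion (fun n : ULift ℕ => S n.down) ⟨0⟩
  · refine lt_of_le_of_lt (mk_iUnion_le _) (Cardinal.mul_lt_of_lt hreg.aleph0_le ?_ ?_)
    · simpa using hunc
    · exact Cardinal.iSup_lt_of_isRegular hreg (by simpa using hunc) (fun n => hcard n.down)
  · intro p hp i
    obtain ⟨n, hn⟩ := Set.mem_iUnion.1 hp
    refine Set.mem_iUnion.2 ⟨⟨n.down + 1⟩, ?_⟩
    exact Or.inr (Set.mem_iUnion.2 ⟨i, p, hn, rfl⟩)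


/-- `P` satisfies the `κ`-chain condition. -/
def CC (κ : Cardinal.{u}) (P : Type u) [PartialOrder P] : Prop :=
  ∀ A : Set P, IsPOAntichain A → #A < κ

/-- `P` is `κ`-Knaster. -/
def Knaster (κ : Cardinal.{u}) (P : Type u) [PartialOrder P] : Prop :=
  ∀ A : Set P, #A = κ → ∃ B ⊆ A, #B = κ ∧ ∀ p ∈ B, ∀ q ∈ B, Compat p q

/-- A club in `P_κ(Y)` for `Y` a subset of `X`: a collection of subsets of `Y` of size `< κ`
that is `⊆`-cofinal among such sets and closed under unions of `⊆`-chains of length `< κ`. -/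
def SubClub (κ : Cardinal.{u}) {X : Type u} (Y : Set X) (C : Set (Set X)) : Prop :=
  (∀ c ∈ C, c ⊆ Y ∧ #c < κ) ∧
  (∀ a : Set X, a ⊆ Y → #a < κ → ∃ c ∈ C, a ⊆ c) ∧
  ∀ D : Set (Set X), D.Nonempty → D ⊆ C → IsChain (· ⊆ ·) D → #D < κ → ⋃₀ D ∈ C

/-- A club in `P_κ(X)`. -/
def PkClub (κ : Cardinal.{u}) {X : Type u} (C : Set (Set X)) : Prop :=
  SubClub κ Set.univ C

/-- A stationary subset of `P_κ(X)` (Jech's notion): one meeting every club. -/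
def PkStat (κ : Cardinal.{u}) {X : Type u} (S : Set (Set X)) : Prop :=
  ∀ C : Set (Set X), PkClub κ C → (S ∩ C).Nonempty

/-- `P` is `κ`-stationarily layered: `Reg_κ(P)` is stationary in `P_κ(P)`. -/
def StationarilyLayered (κ : Cardinal.{u}) (P : Type u) [PartialOrder P] : Prop :=
  PkStat κ {S : Set P | RegSub κ S}

/-- `P` is `<κ`-linked: there is a colouring of `P` by fewer than `κ` colours
that is injective on antichains. -/
def LtLinked (κ : Cardinal.{u}) (P : Type u) [PartialOrder P] : Prop :=
  ∃ (C : Type u) (c : P → C), #C < κ ∧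
    ∀ p q : P, c p = c q → Compat p q

/-- `κ` is weakly compact: `κ` is uncountable and `κ → (κ)²_μ` holds for all `μ < κ`. -/
def WeaklyCompact (κ : Cardinal.{u}) : Prop :=
  ℵ₀ < κ ∧ ∀ (C : Type u) (c : κ.ord.ToType → κ.ord.ToType → C), #C < κ →
    ∃ H : Set κ.ord.ToType, #H = κ ∧ ∃ d : C, ∀ a ∈ H, ∀ b ∈ H, a < b → c a b = d

/-- A normal (fine, `<κ`-complete by normality) filter on `P_κ(X)`. -/
def IsNormalFilterOn (κ : Cardinal.{u}) {X : Type u} (F : Filter (Set X)) : Prop :=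
  F.NeBot ∧ {a : Set X | #a < κ} ∈ F ∧ (∀ x : X, {a : Set X | x ∈ a} ∈ F) ∧
  ∀ f : X → Set (Set X), (∀ x, f x ∈ F) → {a : Set X | ∀ x ∈ a, a ∈ f x} ∈ F

/-- `P` is `F`-layered (`F` a filter on `P_κ(X)`, `X` of cardinality `λ`). -/
def FLayered (κ : Cardinal.{u}) {X : Type u} (F : Filter (Set X))
    (P : Type u) [PartialOrder P] : Prop :=
  #P ≤ #X ∧ ∀ s : X → P, Function.Surjective s →
    {a : Set X | #a < κ ∧ RegSub κ (s '' a)} ∈ F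

section Stmt9

variable (lam : Cardinal.{u})

/-- Binary sequences of length < λ, coded as functions on proper initial segments of a
well order of type `λ.ord`. -/
def SeqLt : Type u := Σ b : lam.ord.ToType, ({x : lam.ord.ToType // x < b} → Bool)

/-- Binary sequences of length λ. -/
def FullSeq : Type u := lam.ord.ToType → Bool

/-- `s` is an initial segment of `x`. -/
def InitSeg (s : SeqLt lam) (x : FullSeq lam) : Prop :=
  ∀ i : {y : lam.ord.ToType // y < s.1}, s.2 i = x i.1

/-- The carrier of the poset of Statement 9: pairs `⟨s_p, a_p⟩` where `s_p` is a finite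
sequence of elements of `2^{<λ}` and `a_p` is a finite subset of `X`. -/
def Carrier9 (X : Set (FullSeq lam)) : Type u :=
  {p : List (SeqLt lam) × Finset (FullSeq lam) // ↑p.2 ⊆ X}

/-- The intended ordering: `p ≤ q` iff `s_q ⊆ s_p`, `a_q ⊆ a_p`, and no new entry of `s_p`
is an initial segment of a member of `a_q`. -/
def LE9 (X : Set (FullSeq lam)) (p q : Carrier9 lam X) : Prop :=
  q.1.1 <+: p.1.1 ∧ q.1.2 ⊆ p.1.2 ∧
    ∀ i : ℕ, ∀ h : i < p.1.1.length, q.1.1.length ≤ i →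
      ∀ x ∈ q.1.2, ¬ InitSeg lam (p.1.1.get ⟨i, h⟩) x

/-- for κ uncountable regular not a strong limit, λ < κ minimal with 2^λ ≥ κ,
and X ⊆ 2^λ of size κ, the described poset is <κ-linked (conditions with the same first
component are compatible) but not κ-stationarily layered. -/
theorem stmt_9 (κ : Cardinal.{u}) (hreg : κ.IsRegular) (hunc : ℵ₀ < κ)
    (hlam : lam < κ) (hmin : κ ≤ 2 ^ lam) (hmin' : ∀ μ < lam, (2 : Cardinal.{u}) ^ μ < κ)
    (X : Set (FullSeq lam)) (hX : #X = κ)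
    (inst : PartialOrder (Carrier9 lam X))
    (hle : ∀ p q : Carrier9 lam X, inst.le p q ↔ LE9 lam X p q) :
    (∀ p q : Carrier9 lam X, p.1.1 = q.1.1 → @Compat _ inst p q) ∧
    @LtLinked κ (Carrier9 lam X) inst ∧ #(Carrier9 lam X) ≤ κ ∧
    ¬ @StationarilyLayered κ (Carrier9 lam X) inst := by
  classical
  letI := inst
  have hlaminf : ℵ₀ ≤ lam := by
    by_contra h
    push_neg at h
    have h2 : (2 : Cardinal.{u}) ^ lam < ℵ₀ :=
      Cardinal.power_lt_aleph0 (nat_lt_aleph0 2) h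
    exact absurd (hmin.trans h2.le) (not_le.2 hunc)
  haveI hne : Nonempty lam.ord.ToType := by
    rw [Ordinal.toType_nonempty_iff_ne_zero, Ne, Cardinal.ord_eq_zero]
    intro h0
    rw [h0] at hlaminf
    exact absurd hlaminf (not_le.2 aleph0_pos)
  haveI : NoMaxOrder lam.ord.ToType := Cardinal.noMaxOrder hlaminf
  -- Part A : same stem implies compatible
  have compat_same : ∀ p q : Carrier9 lam X, p.1.1 = q.1.1 → Compat p q := by
    intro p q hpq
    refine ⟨⟨(p.1.1, p.1.2 ∪ q.1.2), by rw [Finset.coe_union]; exact Set.union_subset p.2 q.2⟩,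
      (hle _ _).2 ⟨List.prefix_rfl, Finset.subset_union_left, ?_⟩,
      (hle _ _).2 ⟨by rw [hpq], Finset.subset_union_right, ?_⟩⟩
    · intro i h hi
      exact absurd hi (not_le.2 h)
    · intro i h hi
      rw [hpq] at h
      exact absurd hi (not_le.2 h)
  -- cardinality of SeqLt and lists
  have hseq : #(SeqLt lam) < κ := by
    have e : #(SeqLt lam) =
        Cardinal.sum fun b : lam.ord.ToType => #({x : lam.ord.ToType // x < b} → Bool) :=
      mk_sigma _
    rw [e]
    refine Cardinal.sum_lt_of_isRegular hreg ?_ ?_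
    · rw [Cardinal.mk_toType, Cardinal.card_ord]; exact hlam
    · intro b
      have h1 : #({x : lam.ord.ToType // x < b} → Bool)
          = 2 ^ #{x : lam.ord.ToType // x < b} := by
        simp [Cardinal.mk_arrow]
      rw [h1]
      exact hmin' _ (Cardinal.mk_Iio_ord_toType b)
  haveI : Nonempty (SeqLt lam) := ⟨⟨Classical.arbitrary _, fun _ => false⟩⟩
  have hlist : #(List (SeqLt lam)) < κ := by
    rw [Cardinal.mk_list_eq_max_mk_aleph0]
    exact max_lt hseq hunc
  -- Part C : cardinality of the carrier
  haveI hXinf : Infinite ↥X := by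
    rw [← Cardinal.aleph0_le_mk_iff, hX]; exact hunc.le
  have hcar : #(Carrier9 lam X) ≤ κ := by
    have hinj : Function.Injective
        (fun p : Carrier9 lam X => (p.1.1, p.1.2.subtype (· ∈ X))) := by
      intro p q h
      have h1 : p.1.1 = q.1.1 := congrArg (fun z => z.1) h
      have h2 : p.1.2.subtype (· ∈ X) = q.1.2.subtype (· ∈ X) := congrArg (fun z => z.2) h
      have h3 := congrArg (fun s => Finset.map (Function.Embedding.subtype (· ∈ X)) s) h2
      simp only [Finset.subtype_map] at h3
      rw [Finset.filter_true_of_mem (fun y hy => p.2 (Finset.mem_coe.2 hy)),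
        Finset.filter_true_of_mem (fun y hy => q.2 (Finset.mem_coe.2 hy))] at h3
      exact Subtype.ext (Prod.ext h1 h3)
    calc #(Carrier9 lam X) ≤ #(List (SeqLt lam) × Finset ↥X) := Cardinal.mk_le_of_injective hinj
      _ = #(List (SeqLt lam)) * #(Finset ↥X) := by
            rw [Cardinal.mk_prod, Cardinal.lift_id, Cardinal.lift_id]
      _ = #(List (SeqLt lam)) * κ := by rw [Cardinal.mk_finset_of_infinite, hX]
      _ ≤ κ * κ := mul_le_mul' hlist.le le_rfl
      _ = κ := Cardinal.mul_eq_self hreg.aleph0_le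
  refine ⟨compat_same, ⟨List (SeqLt lam), fun p => p.1.1, hlist, compat_same⟩, hcar, ?_⟩
  -- Part D : not stationarily layered
  intro hSL
  let F : Carrier9 lam X → SeqLt lam → Carrier9 lam X := fun p t => ⟨(p.1.1 ++ [t], p.1.2), p.2⟩
  let p₀ : Carrier9 lam X := ⟨([], ∅), by simp⟩
  let C : Set (Set (Carrier9 lam X)) := {M | #M < κ ∧ p₀ ∈ M ∧ ∀ p ∈ M, ∀ t, F p t ∈ M}
  have hclub : PkClub κ C := by
    refine ⟨fun c hc => ⟨Set.subset_univ _, hc.1⟩, ?_, ?_⟩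
    · intro a _ hacard
      obtain ⟨M, hsub, hMcard, hMcl⟩ := closure_exists' F hreg hunc hseq (a ∪ {p₀})
        (lt_of_le_of_lt (mk_union_le _ _) (Cardinal.add_lt_of_lt hreg.aleph0_le hacard
          (by rw [Cardinal.mk_singleton]; exact one_lt_aleph0.trans hunc)))
      exact ⟨M, ⟨hMcard, hsub (Or.inr rfl), hMcl⟩, fun y hy => hsub (Or.inl hy)⟩
    · intro D hDne hDC hchain hDcard
      refine ⟨?_, ?_, ?_⟩
      · exact lt_of_le_of_lt (mk_sUnion_le _) (Cardinal.mul_lt_of_lt hreg.aleph0_le hDcard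
          (Cardinal.iSup_lt_of_isRegular hreg hDcard fun s => (hDC s.2).1))
      · obtain ⟨d, hd⟩ := hDne
        exact ⟨d, hd, (hDC hd).2.1⟩
      · intro pp hpp t
        obtain ⟨d, hd, hpd⟩ := hpp
        exact ⟨d, hd, (hDC hd).2.2 pp hpd t⟩
  obtain ⟨M, hMreg, hMC⟩ := hSL C hclub
  obtain ⟨hMregsub, hMlt⟩ := hMreg
  -- find x ∈ X not appearing in any condition of M
  set Y : Set (FullSeq lam) := ⋃ p : M, ((p : Carrier9 lam X).1.2 : Set (FullSeq lam)) with hY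
  have hYlt : #Y < κ := by
    refine lt_of_le_of_lt (mk_iUnion_le _) (Cardinal.mul_lt_of_lt hreg.aleph0_le hMlt ?_)
    exact Cardinal.iSup_lt_of_isRegular hreg hMlt
      fun pp => lt_trans ((Finset.finite_toSet _).lt_aleph0) hunc
  have hnot : ¬ X ⊆ Y := by
    intro h
    exact absurd (hX ▸ Cardinal.mk_le_mk_of_subset h) (not_le.2 hYlt)
  obtain ⟨x, hxX, hxY⟩ := Set.not_subset.1 hnot
  let p : Carrier9 lam X := ⟨([], {x}), by simp [hxX]⟩
  obtain ⟨q, hqM, hqred⟩ := reduct_exists' hMregsub p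
  have hxq : ∀ y ∈ q.1.2, ∃ i, x i ≠ y i := by
    intro y hy
    have hyx : y ≠ x := by
      intro hxy
      subst hxy
      exact hxY (Set.mem_iUnion.2 ⟨⟨q, hqM⟩, Finset.mem_coe.2 hy⟩)
    obtain ⟨i, hi⟩ := Function.ne_iff.1 hyx
    exact ⟨i, fun h => hi h.symm⟩
  obtain ⟨β, hβ⟩ : ∃ β : lam.ord.ToType, ∀ y (hy : y ∈ q.1.2), (hxq y hy).choose < β := by
    set t : Finset lam.ord.ToType := q.1.2.attach.image fun z => (hxq z.1 z.2).choose with ht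
    have key : ∃ β, ∀ i ∈ t, i < β := by
      rcases t.eq_empty_or_nonempty with h | h
      · exact ⟨Classical.arbitrary _, by simp [h]⟩
      · obtain ⟨β, hβ⟩ := exists_gt (t.max' h)
        exact ⟨β, fun i hi => lt_of_le_of_lt (t.le_max' i hi) hβ⟩
    obtain ⟨β, hβ⟩ := key
    exact ⟨β, fun y hy => hβ _ (Finset.mem_image.2 ⟨⟨y, hy⟩, Finset.mem_attach _ _, rfl⟩)⟩
  let tseq : SeqLt lam := ⟨β, fun i => x i.1⟩
  have hrM : F q tseq ∈ M := hMC.2.2 q hqM tseq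
  have hrq : F q tseq ≤ q := by
    refine (hle _ _).2 ⟨List.prefix_append _ _, Finset.Subset.refl _, ?_⟩
    intro i h hi y hy hIS
    have hilen : i = q.1.1.length := by
      simp only [F, List.length_append, List.length_singleton] at h
      omega
    subst hilen
    have hget : (F q tseq).1.1.get ⟨q.1.1.length, h⟩ = tseq := by
      simp [F]
    rw [hget] at hIS
    exact (hxq y hy).choose_spec (hIS ⟨(hxq y hy).choose, hβ y hy⟩)
  obtain ⟨w, hwr, hwp⟩ := hqred (F q tseq) hrM hrq
  have hwr' := (hle _ _).1 hwr
  have hwp' := (hle _ _).1 hwp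
  have hnlt : q.1.1.length < w.1.1.length := by
    have := hwr'.1.length_le
    simp only [F, List.length_append, List.length_singleton] at this
    omega
  have hbad := hwp'.2.2 q.1.1.length hnlt (Nat.zero_le _) x (Finset.mem_singleton_self x)
  apply hbad
  have hgetw : w.1.1.get ⟨q.1.1.length, hnlt⟩ = tseq := by
    have h1 : (F q tseq).1.1[q.1.1.length]'(by simp [F]) = tseq := by simp [F]
    have h2 := hwr'.1.getElem (i := q.1.1.length) (by simp [F])
    simp only [List.get_eq_getElem]
    rw [← h2, h1]
  rw [hgetw]
  intro i
  rfl


end Stmt9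

end Layered
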